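/- arXiv:1505.04516 — 3 statements merged into one kernel-verified Lean document; each statement's English description precedes it below -/
import Mathlib

section
/- Let (S, σ) be a finite measure space, E, B, ν : S → ℝ³ measurable with E, B square-integrable and ‖ν(x)‖ = 1 for σ-a.e. x, and let μ, μ_M, j_M : S → ℝ be integrable with μ_M = μ − (1/(8π))(‖E‖² + ‖B‖²) σ-a.e. and ∫_S (μ_M − j_M) dσ ≥ 0. Define Q² = (1/(4π) ∫_S ⟨E, ν⟩ dσ)² + (1/(4π) ∫_S ⟨B, ν⟩ dσ)². Then Q² ≤ (σ(S)/(2π)) ∫_S (μ − j_M) dσ. -/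
open MeasureTheory Real
open scoped RealInnerProductSpace

/-!
Since `‖ν‖ = 1`, each flux satisfies `|∫ ⟪F, ν⟫| ≤ ∫ ‖F‖`, and Cauchy–Schwarz gives
`(∫ ‖F‖)² ≤ |∂Ω| ∫ ‖F‖²`. So `Q²` is at most `|∂Ω| / (16π²)` times the field energy
`∫ (‖E‖² + ‖B‖²)`, which by the constraint equals `8π ∫ (μ - μ_M)`; adding the nonnegative
`∫ (μ_M - j_M)` gives the bound.
-/

section

variable {α : Type*} [MeasurableSpace α] {μ : Measure α}

theorem sq_integral_le_measureReal_univ_mul_integral_sq [IsFiniteMeasure μ] {f : α → ℝ}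
    (hf : MemLp f 2 μ) :
    (∫ x, f x ∂μ) ^ 2 ≤ μ.real Set.univ * ∫ x, f x ^ 2 ∂μ := by
  have hf1 : Integrable f μ := hf.integrable one_le_two
  have hf2 : Integrable (fun x => f x ^ 2) μ := hf.integrable_sq
  have hquadratic : ∀ t : ℝ,
      0 ≤ μ.real Set.univ * (t * t) + (-2 * ∫ x, f x ∂μ) * t + ∫ x, f x ^ 2 ∂μ := by
    intro t
    have hexpand : ∫ x, (f x - t) ^ 2 ∂μ
        = μ.real Set.univ * (t * t) + (-2 * ∫ x, f x ∂μ) * t + ∫ x, f x ^ 2 ∂μ := by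
      simp only [sub_sq]
      have hlin : Integrable (fun x => 2 * f x * t) μ := (hf1.const_mul 2).mul_const t
      rw [integral_add (f := fun x => f x ^ 2 - 2 * f x * t) (hf2.sub hlin) (integrable_const _),
        integral_sub hf2 hlin,
        integral_mul_const, integral_const_mul, integral_const, smul_eq_mul]
      ring
    exact hexpand ▸ integral_nonneg fun x => sq_nonneg _
  have := discrim_le_zero hquadratic
  rw [discrim] at this
  linarith

theorem abs_integral_inner_le_integral_norm {E : Type*} [NormedAddCommGroup E]
    [InnerProductSpace ℝ E] {F ν : α → E} (hF : Integrable F μ) (hν : ∀ᵐ x ∂μ, ‖ν x‖ ≤ 1) :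
    |∫ x, ⟪F x, ν x⟫ ∂μ| ≤ ∫ x, ‖F x‖ ∂μ :=
  calc |∫ x, ⟪F x, ν x⟫ ∂μ| ≤ ∫ x, ‖⟪F x, ν x⟫‖ ∂μ :=
      norm_integral_le_integral_norm fun x => ⟪F x, ν x⟫
    _ ≤ ∫ x, ‖F x‖ ∂μ := by
      refine integral_mono_of_nonneg (.of_forall fun x => norm_nonneg _) hF.norm ?_
      filter_upwards [hν] with x hx
      calc ‖⟪F x, ν x⟫‖ ≤ ‖F x‖ * ‖ν x‖ := norm_inner_le_norm _ _
        _ ≤ ‖F x‖ := mul_le_of_le_one_right (norm_nonneg _) hx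

theorem sq_integral_inner_le_measureReal_univ_mul_integral_norm_sq [IsFiniteMeasure μ]
    {E : Type*} [NormedAddCommGroup E] [InnerProductSpace ℝ E] {F ν : α → E}
    (hF : MemLp F 2 μ) (hν : ∀ᵐ x ∂μ, ‖ν x‖ ≤ 1) :
    (∫ x, ⟪F x, ν x⟫ ∂μ) ^ 2 ≤ μ.real Set.univ * ∫ x, ‖F x‖ ^ 2 ∂μ :=
  calc (∫ x, ⟪F x, ν x⟫ ∂μ) ^ 2 = |∫ x, ⟪F x, ν x⟫ ∂μ| ^ 2 := (sq_abs _).symm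
    _ ≤ (∫ x, ‖F x‖ ∂μ) ^ 2 := by
      gcongr
      exact abs_integral_inner_le_integral_norm (hF.integrable one_le_two) hν
    _ ≤ μ.real Set.univ * ∫ x, ‖F x‖ ^ 2 ∂μ :=
      sq_integral_le_measureReal_univ_mul_integral_sq hF.norm

end

theorem charge_sq_le_area_mul_matter_integral_general
    {S : Type*} [MeasurableSpace S] (σ : Measure S) [IsFiniteMeasure σ]
    (E B ν : S → EuclideanSpace ℝ (Fin 3))
    (hE2 : MemLp E 2 σ) (hB2 : MemLp B 2 σ)
    (hν1 : ∀ᵐ x ∂σ, ‖ν x‖ = 1)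
    (μ μM jM : S → ℝ)
    (hμM : Integrable μM σ) (hjM : Integrable jM σ)
    (hconstraint : ∀ᵐ x ∂σ, μM x = μ x - (1 / (8 * π)) * (‖E x‖ ^ 2 + ‖B x‖ ^ 2))
    (hdec : 0 ≤ ∫ x, (μM x - jM x) ∂σ) :
    ((1 / (4 * π)) * ∫ x, ⟪E x, ν x⟫ ∂σ) ^ 2
      + ((1 / (4 * π)) * ∫ x, ⟪B x, ν x⟫ ∂σ) ^ 2
    ≤ ((σ Set.univ).toReal / (2 * π)) * ∫ x, (μ x - jM x) ∂σ := by
  have hν : ∀ᵐ x ∂σ, ‖ν x‖ ≤ 1 := hν1.mono fun x hx => hx.le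
  have hEflux := sq_integral_inner_le_measureReal_univ_mul_integral_norm_sq hE2 hν
  have hBflux := sq_integral_inner_le_measureReal_univ_mul_integral_norm_sq hB2 hν
  have hEsq : Integrable (fun x => ‖E x‖ ^ 2) σ := hE2.norm.integrable_sq
  have hBsq : Integrable (fun x => ‖B x‖ ^ 2) σ := hB2.norm.integrable_sq
  have hsplit : ∫ x, (μ x - jM x) ∂σ = (∫ x, (μM x - jM x) ∂σ)
      + (1 / (8 * π)) * ((∫ x, ‖E x‖ ^ 2 ∂σ) + ∫ x, ‖B x‖ ^ 2 ∂σ) := by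
    rw [← integral_add hEsq hBsq, ← integral_const_mul,
      ← integral_add (f := fun x => μM x - jM x)
        (g := fun x => (1 / (8 * π)) * (‖E x‖ ^ 2 + ‖B x‖ ^ 2))
        (hμM.sub hjM) ((hEsq.add hBsq).const_mul _)]
    refine integral_congr_ae ?_
    filter_upwards [hconstraint] with x hx
    rw [hx]
    ring
  rw [hsplit, ← measureReal_def]
  have hπ : 0 < π := pi_pos
  calc ((1 / (4 * π)) * ∫ x, ⟪E x, ν x⟫ ∂σ) ^ 2 + ((1 / (4 * π)) * ∫ x, ⟪B x, ν x⟫ ∂σ) ^ 2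
      = ((∫ x, ⟪E x, ν x⟫ ∂σ) ^ 2 + (∫ x, ⟪B x, ν x⟫ ∂σ) ^ 2) / (16 * π ^ 2) := by ring
    _ ≤ (σ.real Set.univ * ((∫ x, ‖E x‖ ^ 2 ∂σ) + ∫ x, ‖B x‖ ^ 2 ∂σ)) / (16 * π ^ 2) := by
      gcongr
      linarith
    _ = (σ.real Set.univ / (2 * π))
          * (0 + (1 / (8 * π)) * ((∫ x, ‖E x‖ ^ 2 ∂σ) + ∫ x, ‖B x‖ ^ 2 ∂σ)) := by
      field_simp
      ring
    _ ≤ _ := by gcongr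

/-- Inequality (3) of the paper: the squared total charge of a body is bounded by
its boundary area times the integral of `μ - |J_M|` over the boundary. -/
theorem charge_sq_le_area_mul_matter_integral
    {S : Type*} [MeasurableSpace S] (σ : Measure S) [IsFiniteMeasure σ]
    (E B ν : S → EuclideanSpace ℝ (Fin 3))
    (hE : Measurable E) (hB : Measurable B) (hν : Measurable ν)
    (hE2 : MemLp E 2 σ) (hB2 : MemLp B 2 σ)
    (hν1 : ∀ᵐ x ∂σ, ‖ν x‖ = 1)
    (μ μM jM : S → ℝ)
    (hμ : Integrable μ σ) (hμM : Integrable μM σ) (hjM : Integrable jM σ)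
    (hconstraint : ∀ᵐ x ∂σ, μM x = μ x - (1 / (8 * π)) * (‖E x‖ ^ 2 + ‖B x‖ ^ 2))
    (hdec : 0 ≤ ∫ x, (μM x - jM x) ∂σ) :
    ((1 / (4 * π)) * ∫ x, ⟪E x, ν x⟫ ∂σ) ^ 2
      + ((1 / (4 * π)) * ∫ x, ⟪B x, ν x⟫ ∂σ) ^ 2
    ≤ ((σ Set.univ).toReal / (2 * π)) * ∫ x, (μ x - jM x) ∂σ :=
  charge_sq_le_area_mul_matter_integral_general σ E B ν hE2 hB2 hν1 μ μM jM hμM hjM hconstraint hdec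
end

section
/- Let c, G, R be positive real constants and μ₀ ≥ 0 a real constant. Let (S, σ) be a finite measure space, E, B, ν : S → ℝ³ measurable with E, B square-integrable and ‖ν(x)‖ = 1 σ-a.e., and j_M : S → ℝ measurable with 0 ≤ j_M σ-a.e. Assume the constraint μ_M = μ₀ − (1/(8π))(‖E‖² + ‖B‖²) σ-a.e. together with the charged dominant energy condition μ_M ≥ j_M σ-a.e., and assume the Schoen–Yau density estimate μ₀ ≤ (π c⁴)/(6 G R²). Define Q² = (1/(4π) ∫_S ⟨E, ν⟩ dσ)² + (1/(4π) ∫_S ⟨B, ν⟩ dσ)². Then |Q| ≤ √(c⁴/(12G)) · σ(S)/R. -/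
/-!
The constraint together with the charged dominant energy condition gives `‖E‖² + ‖B‖² ≤ 8πμ₀`
pointwise, hence `⟪E, ν⟫² + ⟪B, ν⟫² ≤ 8πμ₀`. Bounding the norm of the integral of the complex
flux density `⟪E, ν⟫ + i ⟪B, ν⟫` by its essential bound `√(8πμ₀)` times `|∂Ω|` yields
`(4πQ)² ≤ 8πμ₀ |∂Ω|²`, and the Schoen–Yau estimate turns `μ₀ / (2π)` into `c⁴ / (12 G R²)`.
-/

open MeasureTheory Real
open scoped RealInnerProductSpace

theorem sq_inner_le_sq_norm_of_norm_eq_one {F : Type*} [NormedAddCommGroup F]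
    [InnerProductSpace ℝ F] (e : F) {ν : F} (hν : ‖ν‖ = 1) : ⟪e, ν⟫ ^ 2 ≤ ‖e‖ ^ 2 := by
  have := abs_real_inner_le_norm e ν
  rw [hν, mul_one] at this
  exact sq_le_sq' (abs_le.mp this).1 (abs_le.mp this).2

theorem field_energy_le_of_dominant_energy {μ₀ μM j e : ℝ} (hj : 0 ≤ j) (hdec : j ≤ μM)
    (hμM : μM = μ₀ - 1 / (8 * π) * e) : e ≤ 8 * π * μ₀ := by
  have : 1 / (8 * π) * e ≤ μ₀ := by linarith
  rwa [div_mul_eq_mul_div, one_mul, div_le_iff₀ (by positivity), mul_comm] at this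

theorem sq_integral_add_sq_integral_le {S : Type*} [MeasurableSpace S] (σ : Measure S)
    [IsFiniteMeasure σ] {f g : S → ℝ} (hf : AEStronglyMeasurable f σ)
    (hg : AEStronglyMeasurable g σ) {K : ℝ} (hK : 0 ≤ K)
    (hfg : ∀ᵐ x ∂σ, f x ^ 2 + g x ^ 2 ≤ K) :
    (∫ x, f x ∂σ) ^ 2 + (∫ x, g x ∂σ) ^ 2 ≤ K * σ.real Set.univ ^ 2 := by
  set h : S → ℂ := fun x ↦ f x + g x * Complex.I
  have hh : ∀ᵐ x ∂σ, ‖h x‖ ≤ √K := by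
    filter_upwards [hfg] with x hx
    rw [Complex.norm_add_mul_I]
    exact Real.sqrt_le_sqrt hx
  have hint : Integrable h σ := .of_bound (by fun_prop) _ hh
  have hre : ∫ x, f x ∂σ = (∫ x, h x ∂σ).re := by simpa [h] using integral_re hint
  have him : ∫ x, g x ∂σ = (∫ x, h x ∂σ).im := by simpa [h] using integral_im hint
  calc (∫ x, f x ∂σ) ^ 2 + (∫ x, g x ∂σ) ^ 2 = ‖∫ x, h x ∂σ‖ ^ 2 := by
        rw [hre, him, Complex.sq_norm, Complex.normSq_apply]; ring
    _ ≤ (√K * σ.real Set.univ) ^ 2 := by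
        gcongr; exact norm_integral_le_of_norm_le_const hh
    _ = K * σ.real Set.univ ^ 2 := by rw [mul_pow, sq_sqrt hK]

theorem charge_le_size_maximal_general
    (c G R : ℝ) (hG : 0 < G) (hR : 0 < R)
    (μ₀ : ℝ) (hμ₀ : 0 ≤ μ₀)
    {S : Type*} [MeasurableSpace S] (σ : Measure S) [IsFiniteMeasure σ]
    (E B ν : S → EuclideanSpace ℝ (Fin 3))
    (hE : Measurable E) (hB : Measurable B) (hν : Measurable ν)
    (hν1 : ∀ᵐ x ∂σ, ‖ν x‖ = 1)
    (μM jM : S → ℝ)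
    (hjM0 : ∀ᵐ x ∂σ, 0 ≤ jM x)
    (hconstraint : ∀ᵐ x ∂σ, μM x = μ₀ - (1 / (8 * π)) * (‖E x‖ ^ 2 + ‖B x‖ ^ 2))
    (hdec : ∀ᵐ x ∂σ, jM x ≤ μM x)
    (hSY : μ₀ ≤ π * c ^ 4 / (6 * G * R ^ 2)) :
    Real.sqrt (((1 / (4 * π)) * ∫ x, ⟪E x, ν x⟫ ∂σ) ^ 2
        + ((1 / (4 * π)) * ∫ x, ⟪B x, ν x⟫ ∂σ) ^ 2)
    ≤ Real.sqrt (c ^ 4 / (12 * G)) * ((σ Set.univ).toReal / R) := by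
  have hflux : ∀ᵐ x ∂σ, ⟪E x, ν x⟫ ^ 2 + ⟪B x, ν x⟫ ^ 2 ≤ 8 * π * μ₀ := by
    filter_upwards [hν1, hjM0, hdec, hconstraint] with x hνx hj hdecx hμM
    have := field_energy_le_of_dominant_energy hj hdecx hμM
    linarith [sq_inner_le_sq_norm_of_norm_eq_one (E x) hνx,
      sq_inner_le_sq_norm_of_norm_eq_one (B x) hνx]
  have hQ := sq_integral_add_sq_integral_le σ (hE.inner hν).aestronglyMeasurable
    (hB.inner hν).aestronglyMeasurable (by positivity) hflux
  set ΦE := ∫ x, ⟪E x, ν x⟫ ∂σ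
  set ΦB := ∫ x, ⟪B x, ν x⟫ ∂σ
  set A := σ.real Set.univ
  calc √((1 / (4 * π) * ΦE) ^ 2 + (1 / (4 * π) * ΦB) ^ 2)
      ≤ √(c ^ 4 / (12 * G) * (A / R) ^ 2) := by
        gcongr
        calc (1 / (4 * π) * ΦE) ^ 2 + (1 / (4 * π) * ΦB) ^ 2
            = (ΦE ^ 2 + ΦB ^ 2) / (16 * π ^ 2) := by ring
          _ ≤ 8 * π * μ₀ * A ^ 2 / (16 * π ^ 2) := by gcongr
          _ ≤ 8 * π * (π * c ^ 4 / (6 * G * R ^ 2)) * A ^ 2 / (16 * π ^ 2) := by gcongr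
          _ = c ^ 4 / (12 * G) * (A / R) ^ 2 := by field_simp; ring
    _ = √(c ^ 4 / (12 * G)) * (A / R) := by
        rw [Real.sqrt_mul' _ (sq_nonneg _), Real.sqrt_sq (by positivity)]

/-- Theorem 1 of the paper (maximal data with constant energy density `μ₀`),
conditional on the Schoen–Yau density estimate `μ₀ ≤ π c⁴ / (6 G R²)`:
the total charge is bounded by `√(c⁴/(12 G)) · |∂Ω| / R`. -/
theorem charge_le_size_maximal
    (c G R : ℝ) (hc : 0 < c) (hG : 0 < G) (hR : 0 < R)
    (μ₀ : ℝ) (hμ₀ : 0 ≤ μ₀)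
    {S : Type*} [MeasurableSpace S] (σ : Measure S) [IsFiniteMeasure σ]
    (E B ν : S → EuclideanSpace ℝ (Fin 3))
    (hE : Measurable E) (hB : Measurable B) (hν : Measurable ν)
    (hE2 : MemLp E 2 σ) (hB2 : MemLp B 2 σ)
    (hν1 : ∀ᵐ x ∂σ, ‖ν x‖ = 1)
    (μM jM : S → ℝ) (hjMmeas : Measurable jM)
    (hjM0 : ∀ᵐ x ∂σ, 0 ≤ jM x)
    (hconstraint : ∀ᵐ x ∂σ, μM x = μ₀ - (1 / (8 * π)) * (‖E x‖ ^ 2 + ‖B x‖ ^ 2))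
    (hdec : ∀ᵐ x ∂σ, jM x ≤ μM x)
    (hSY : μ₀ ≤ π * c ^ 4 / (6 * G * R ^ 2)) :
    Real.sqrt (((1 / (4 * π)) * ∫ x, ⟪E x, ν x⟫ ∂σ) ^ 2
        + ((1 / (4 * π)) * ∫ x, ⟪B x, ν x⟫ ∂σ) ^ 2)
    ≤ Real.sqrt (c ^ 4 / (12 * G)) * ((σ Set.univ).toReal / R) :=
  charge_le_size_maximal_general c G R hG hR μ₀ hμ₀ σ E B ν hE hB hν hν1 μM jM hjM0 hconstraint hdec
    hSY
end

section
/- Let φ : ℝ³ → ℝ be a smooth function with compact support, q : ℝ³ → ℝ³ a continuously differentiable vector field, and f, g : ℝ³ → ℝ locally integrable functions with f ≥ 0 and g ≥ 0 pointwise. Define R̄ : ℝ³ → ℝ by R̄ = f + g + 2‖q‖² − 2 div q. Then ∫_{ℝ³} (‖∇φ‖² + (1/2) R̄ φ²) dx ≥ (1/2) ∫_{ℝ³} f φ² dx. -/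
open MeasureTheory Real
open scoped RealInnerProductSpace

/-- The divergence of a vector field on `ℝ³ = EuclideanSpace ℝ (Fin 3)`. -/
noncomputable def div3 (q : EuclideanSpace ℝ (Fin 3) → EuclideanSpace ℝ (Fin 3))
    (x : EuclideanSpace ℝ (Fin 3)) : ℝ :=
  ∑ i : Fin 3, fderiv ℝ q x (EuclideanSpace.single i 1) i

local notation "E3" => EuclideanSpace ℝ (Fin 3)

/-- The integral of a directional derivative of a `C¹` compactly supported function vanishes. -/
lemma integral_fderiv_apply_eq_zero (u : E3 → ℝ) (hu : ContDiff ℝ 1 u)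
    (huc : HasCompactSupport u) (v : E3) :
    ∫ x, fderiv ℝ u x v = 0 := by
  obtain ⟨C, hC⟩ := ContDiff.lipschitzWith_of_hasCompactSupport huc hu one_ne_zero
  have key := LipschitzWith.integral_lineDeriv_mul_eq (μ := volume)
      (LipschitzWith.const (1 : ℝ)) hC huc v
  have h1 : ∀ x : E3, lineDeriv ℝ (fun _ : E3 => (1 : ℝ)) x v = 0 := by
    intro x
    rw [(differentiableAt_const (1 : ℝ)).lineDeriv_eq_fderiv]
    simp
  have h2 : ∀ x : E3, lineDeriv ℝ u x (-v) = -(fderiv ℝ u x v) := by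
    intro x
    rw [(hu.differentiable one_ne_zero x).lineDeriv_eq_fderiv]
    simp
  simp only [h1, h2, zero_mul, mul_one, integral_zero] at key
  have : ∫ x, -(fderiv ℝ u x v) = -∫ x, fderiv ℝ u x v := integral_neg _
  linarith [key, this, key ▸ this]

/-- The integral of the divergence of a `C¹` compactly supported vector field vanishes. -/
lemma integral_div3_eq_zero (F : E3 → E3) (hF : ContDiff ℝ 1 F)
    (hFc : HasCompactSupport F) :
    ∫ x, div3 F x = 0 := by
  have hFd := hF.differentiable one_ne_zero
  have hfd_cont : Continuous fun x => fderiv ℝ F x := hF.continuous_fderiv one_ne_zero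
  have hfd_supp : HasCompactSupport fun x => fderiv ℝ F x :=
    hFc.fderiv ℝ
  have hint : ∀ i : Fin 3, Integrable (fun x => fderiv ℝ F x (EuclideanSpace.single i 1) i) := by
    intro i
    apply Continuous.integrable_of_hasCompactSupport
    · exact (EuclideanSpace.proj i).continuous.comp (hfd_cont.clm_apply continuous_const)
    · apply HasCompactSupport.intro hFc
      intro x hx
      have : fderiv ℝ F x = 0 := by
        by_contra h
        exact hx (support_fderiv_subset ℝ (Function.mem_support.mpr h))
      simp [this]
  have hswap : ∫ x, div3 F x
      = ∑ i : Fin 3, ∫ x, fderiv ℝ F x (EuclideanSpace.single i 1) i := by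
    rw [← integral_finset_sum _ (fun i _ => hint i)]
    rfl
  rw [hswap]
  apply Finset.sum_eq_zero
  intro i _
  set u : E3 → ℝ := fun y => F y i with hu_def
  have hcomp : ∀ x v, fderiv ℝ u x v = fderiv ℝ F x v i := by
    intro x v
    have : HasFDerivAt u ((EuclideanSpace.proj i : E3 →L[ℝ] ℝ).comp (fderiv ℝ F x)) x := by
      exact ((EuclideanSpace.proj i).hasFDerivAt.comp x (hFd x).hasFDerivAt)
    rw [this.fderiv]
    rfl
  have hu : ContDiff ℝ 1 u := by
    have : u = fun y => (EuclideanSpace.proj i : E3 →L[ℝ] ℝ) (F y) := rfl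
    rw [this]
    exact (EuclideanSpace.proj i).contDiff.comp hF
  have huc : HasCompactSupport u := by
    apply HasCompactSupport.intro hFc
    intro x hx
    have : F x = 0 := image_eq_zero_of_notMem_tsupport hx
    simp [hu_def, this]
  calc ∫ x, fderiv ℝ F x (EuclideanSpace.single i 1) i
      = ∫ x, fderiv ℝ u x (EuclideanSpace.single i 1) := by
        congr 1; funext x; rw [hcomp]
    _ = 0 := integral_fderiv_apply_eq_zero u hu huc _

lemma euclidean_sum_single (v : E3) :
    ∑ i : Fin 3, v i • EuclideanSpace.single i (1 : ℝ) = v := by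
  ext j
  have : (∑ i : Fin 3, v i • EuclideanSpace.single i (1 : ℝ)) j
      = ∑ i : Fin 3, (v i • EuclideanSpace.single i (1 : ℝ)) j := by
    rw [WithLp.ofLp_sum]; exact Finset.sum_apply j _ _
  rw [this]
  simp [EuclideanSpace.single_apply]

/-- The integration-by-parts estimate behind the principal eigenvalue bound (16):
for `R̄ = f + g + 2‖q‖² - 2 div q` with `f, g ≥ 0`, one has
`∫ (‖∇φ‖² + (1/2) R̄ φ²) ≥ (1/2) ∫ f φ²`. -/
theorem eigenvalue_integrand_bound
    (φ : EuclideanSpace ℝ (Fin 3) → ℝ)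
    (hφ : ContDiff ℝ (⊤ : ℕ∞) φ) (hφc : HasCompactSupport φ)
    (q : EuclideanSpace ℝ (Fin 3) → EuclideanSpace ℝ (Fin 3))
    (hq : ContDiff ℝ 1 q)
    (f g : EuclideanSpace ℝ (Fin 3) → ℝ)
    (hf : LocallyIntegrable f volume) (hg : LocallyIntegrable g volume)
    (hf0 : ∀ x, 0 ≤ f x) (hg0 : ∀ x, 0 ≤ g x) :
    (1 / 2) * ∫ x, f x * (φ x) ^ 2
      ≤ ∫ x, (‖gradient φ x‖ ^ 2
          + (1 / 2) * (f x + g x + 2 * ‖q x‖ ^ 2 - 2 * div3 q x) * (φ x) ^ 2) := by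
  have hφ1 : ContDiff ℝ 1 φ := hφ.of_le (by simp)
  have hφd : Differentiable ℝ φ := hφ1.differentiable one_ne_zero
  have hqd : Differentiable ℝ q := hq.differentiable one_ne_zero
  -- the vector field to which we apply the divergence theorem
  set F : E3 → E3 := fun y => (φ y * φ y) • q y with hF_def
  have hF : ContDiff ℝ 1 F := (hφ1.mul hφ1).smul hq
  have hFc : HasCompactSupport F := by
    apply HasCompactSupport.intro hφc
    intro x hx
    simp [hF_def, image_eq_zero_of_notMem_tsupport hx]
  -- inner product with the gradient is the Fréchet derivative
  have hgrad : ∀ (x : E3) (v : E3), ⟪gradient φ x, v⟫ = fderiv ℝ φ x v := by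
    intro x v
    simp [gradient, InnerProductSpace.toDual_symm_apply]
  -- pointwise formula for div3 F
  have hdF : ∀ x, div3 F x
      = (φ x * φ x) * div3 q x + 2 * φ x * fderiv ℝ φ x (q x) := by
    intro x
    have hmul : DifferentiableAt ℝ (fun y => φ y * φ y) x := (hφd x).mul (hφd x)
    have h1 : fderiv ℝ F x = (φ x * φ x) • fderiv ℝ q x
        + (fderiv ℝ (fun y => φ y * φ y) x).smulRight (q x) :=
      fderiv_smul hmul (hqd x)
    have h2 : fderiv ℝ (fun y => φ y * φ y) x
        = φ x • fderiv ℝ φ x + φ x • fderiv ℝ φ x := fderiv_mul (hφd x) (hφd x)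
    have hsum : ∑ i : Fin 3, fderiv ℝ φ x (EuclideanSpace.single i 1) * q x i
        = fderiv ℝ φ x (q x) := by
      conv_rhs => rw [← euclidean_sum_single (q x), _root_.map_sum]
      refine Finset.sum_congr rfl fun i _ => ?_
      rw [ContinuousLinearMap.map_smul, smul_eq_mul, mul_comm]
    simp only [div3, h1, h2, ContinuousLinearMap.add_apply, ContinuousLinearMap.smul_apply,
      ContinuousLinearMap.smulRight_apply, PiLp.add_apply, PiLp.smul_apply, smul_eq_mul]
    rw [Finset.sum_add_distrib, ← Finset.mul_sum]
    rw [show ∑ i : Fin 3, (φ x * fderiv ℝ φ x (EuclideanSpace.single i 1)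
        + φ x * fderiv ℝ φ x (EuclideanSpace.single i 1)) * q x i
      = 2 * φ x * ∑ i : Fin 3, fderiv ℝ φ x (EuclideanSpace.single i 1) * q x i by
        rw [Finset.mul_sum]; congr 1; funext i; ring]
    rw [hsum]
  -- the four pieces of the integrand
  set A : E3 → ℝ := fun x => 1 / 2 * (f x * φ x ^ 2) with hA_def
  set B : E3 → ℝ := fun x => 1 / 2 * (g x * φ x ^ 2) with hB_def
  set Cc : E3 → ℝ := fun x => ‖gradient φ x + φ x • q x‖ ^ 2 with hC_def
  -- pointwise identity
  have key : ∀ x, ‖gradient φ x‖ ^ 2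
        + (1 / 2) * (f x + g x + 2 * ‖q x‖ ^ 2 - 2 * div3 q x) * (φ x) ^ 2
      = A x + B x + Cc x - div3 F x := by
    intro x
    have hexp : Cc x = ‖gradient φ x‖ ^ 2 + 2 * (φ x * fderiv ℝ φ x (q x))
        + φ x ^ 2 * ‖q x‖ ^ 2 := by
      show ‖gradient φ x + φ x • q x‖ ^ 2 = _
      rw [norm_add_sq_real, real_inner_smul_right, hgrad]
      rw [norm_smul]
      simp [mul_pow, sq_abs]
    rw [hexp, hdF x]
    simp only [hA_def, hB_def]
    ring
  -- integrability facts
  have hφsq_cont : Continuous fun x => 1 / 2 * φ x ^ 2 :=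
    continuous_const.mul (hφ.continuous.pow 2)
  have hφsq_supp : HasCompactSupport fun x => 1 / 2 * φ x ^ 2 := by
    apply HasCompactSupport.intro hφc
    intro x hx
    simp [image_eq_zero_of_notMem_tsupport hx]
  have hA_int : Integrable A := by
    have := hf.integrable_smul_left_of_hasCompactSupport hφsq_cont hφsq_supp
    apply this.congr
    filter_upwards with x
    simp only [hA_def, smul_eq_mul]; ring
  have hB_int : Integrable B := by
    have := hg.integrable_smul_left_of_hasCompactSupport hφsq_cont hφsq_supp
    apply this.congr
    filter_upwards with x
    simp only [hB_def, smul_eq_mul]; ring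
  have hgrad_cont : Continuous fun x => gradient φ x := by
    have : Continuous fun x => fderiv ℝ φ x := hφ.continuous_fderiv (by simp)
    exact (InnerProductSpace.toDual ℝ E3).symm.continuous.comp this
  have hgrad_zero : ∀ x ∉ tsupport φ, gradient φ x = 0 := by
    intro x hx
    have : fderiv ℝ φ x = 0 := by
      by_contra h
      exact hx (support_fderiv_subset ℝ (Function.mem_support.mpr h))
    simp [gradient, this]
  have hC_int : Integrable Cc := by
    apply Continuous.integrable_of_hasCompactSupport
    · exact ((hgrad_cont.add (hφ.continuous.smul hq.continuous)).norm.pow 2)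
    · apply HasCompactSupport.intro hφc
      intro x hx
      simp [hC_def, hgrad_zero x hx, image_eq_zero_of_notMem_tsupport hx]
  have hD_int : Integrable (fun x => div3 F x) := by
    apply Continuous.integrable_of_hasCompactSupport
    · have hfd_cont : Continuous fun x => fderiv ℝ F x := hF.continuous_fderiv one_ne_zero
      apply continuous_finset_sum
      intro i _
      exact (EuclideanSpace.proj i).continuous.comp (hfd_cont.clm_apply continuous_const)
    · apply HasCompactSupport.intro hFc
      intro x hx
      have : fderiv ℝ F x = 0 := by
        by_contra h
        exact hx (support_fderiv_subset ℝ (Function.mem_support.mpr h))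
      simp [div3, this]
  -- assemble
  have hsplit : ∫ x, (‖gradient φ x‖ ^ 2
        + (1 / 2) * (f x + g x + 2 * ‖q x‖ ^ 2 - 2 * div3 q x) * (φ x) ^ 2)
      = (∫ x, A x) + (∫ x, B x) + (∫ x, Cc x) - ∫ x, div3 F x := by
    rw [show (fun x => ‖gradient φ x‖ ^ 2
        + (1 / 2) * (f x + g x + 2 * ‖q x‖ ^ 2 - 2 * div3 q x) * (φ x) ^ 2)
      = fun x => A x + B x + Cc x - div3 F x from funext key]
    have h1 : Integrable (fun x => A x + B x) := hA_int.add hB_int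
    have h2 : Integrable (fun x => A x + B x + Cc x) := h1.add hC_int
    rw [integral_sub h2 hD_int, integral_add h1 hC_int, integral_add hA_int hB_int]
  have hDzero : ∫ x, div3 F x = 0 := integral_div3_eq_zero F hF hFc
  have hAval : ∫ x, A x = 1 / 2 * ∫ x, f x * φ x ^ 2 := by
    show ∫ x, 1 / 2 * (f x * φ x ^ 2) = _
    exact integral_const_mul _ _
  have hBpos : 0 ≤ ∫ x, B x := by
    apply integral_nonneg
    intro x
    have := hg0 x
    have h2 : (0:ℝ) ≤ φ x ^ 2 := sq_nonneg _
    simp only [hB_def]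
    positivity
  have hCpos : 0 ≤ ∫ x, Cc x := by
    apply integral_nonneg
    intro x
    exact sq_nonneg _
  rw [hsplit, hDzero, ← hAval]
  linarith
end
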